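/- arXiv:1810.09746 — 2 statements merged into one kernel-verified Lean document; each statement's English description precedes it below -/
import Mathlib

section
/- The expected disagreement satisfies d_ρ ≤ 2(√e_ρ − e_ρ) where e_ρ is the expected joint error, provided 2e_ρ + d_ρ < 1. -/
open MeasureTheory Finset
open scoped symmDiff

/-! With `A h` the error set of `h` and `W = ∑ h, ρ h • 𝟙_{A h}` the `ρ`-weighted error rate, the
joint error is `e = 𝔼[W²]`. Since predictions and labels are `±1`, two hypotheses disagree exactly
where one of them errs, i.e. on `A h₁ ∆ A h₂`, and summing over pairs gives `d = 2 𝔼[W] - 2 e`.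
Jensen's inequality `𝔼[W]² ≤ 𝔼[W²] = e` then bounds `𝔼[W]` by `√e`. -/

lemma ne_iff_xor_ne_of_mem_pair {α : Type*} {u v a b y : α} (ha : a = u ∨ a = v)
    (hb : b = u ∨ b = v) (hy : y = u ∨ y = v) : a ≠ b ↔ Xor (a ≠ y) (b ≠ y) := by
  grind

lemma sum_sum_mul_mul_add_sub_two_mul {ι R : Type*} [Fintype ι] [CommRing R] {w : ι → R}
    (hw : ∑ i, w i = 1) (m : ι → R) (c : ι → ι → R) :
    ∑ i, ∑ j, w i * w j * (m i + m j - 2 * c i j)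
      = 2 * ∑ i, w i * m i - 2 * ∑ i, ∑ j, w i * w j * c i j := by
  have hleft : ∑ i, ∑ j, w i * w j * m i = ∑ i, w i * m i := by
    simp_rw [mul_right_comm (w _) (w _), ← mul_sum, hw, mul_one]
  have hright : ∑ i, ∑ j, w i * w j * m j = ∑ j, w j * m j := by
    simp_rw [mul_assoc, ← mul_sum, ← sum_mul, hw, one_mul]
  simp only [mul_add, mul_sub, sum_add_distrib, sum_sub_distrib, hleft, hright,
    mul_left_comm _ (2 : R), ← mul_sum]
  ring

section
variable {Ω ι : Type*} [Fintype ι]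

noncomputable def weightedIndicator (w : ι → ℝ) (A : ι → Set Ω) (ω : Ω) : ℝ :=
  ∑ i, w i * (A i).indicator 1 ω

lemma weightedIndicator_sq (w : ι → ℝ) (A : ι → Set Ω) (ω : Ω) :
    weightedIndicator w A ω ^ 2
      = weightedIndicator (fun ij : ι × ι ↦ w ij.1 * w ij.2) (fun ij ↦ A ij.1 ∩ A ij.2) ω := by
  simp only [weightedIndicator, sq, sum_mul_sum, ← Finset.univ_product_univ, sum_product,
    Set.inter_indicator_one, Pi.mul_apply]
  refine sum_congr rfl fun i _ ↦ sum_congr rfl fun j _ ↦ by ring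

variable [MeasurableSpace Ω] {μ : Measure Ω}

lemma sq_integral_le_integral_sq [IsProbabilityMeasure μ] {f : Ω → ℝ} (hf : MemLp f 2 μ) :
    (∫ ω, f ω ∂μ) ^ 2 ≤ ∫ ω, f ω ^ 2 ∂μ := by
  have := ProbabilityTheory.variance_nonneg f μ
  rw [ProbabilityTheory.variance_eq_sub hf] at this
  simpa [sub_nonneg] using this

variable [IsFiniteMeasure μ]

lemma measureReal_symmDiff_eq_add_sub_inter {s t : Set Ω}
    (hs : MeasurableSet s) (ht : MeasurableSet t) :
    μ.real (s ∆ t) = μ.real s + μ.real t - 2 * μ.real (s ∩ t) := by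
  rw [measureReal_symmDiff_eq hs ht, ← measureReal_inter_add_sdiff (s := s) ht,
    ← measureReal_inter_add_sdiff (s := t) hs, Set.inter_comm t s]
  ring

variable {A : ι → Set Ω}

lemma memLp_weightedIndicator (w : ι → ℝ) (hA : ∀ i, MeasurableSet (A i)) (p : ENNReal) :
    MemLp (weightedIndicator w A) p μ :=
  memLp_finsetSum _ fun i _ ↦
    (memLp_indicator_const p (hA i) 1 (.inr (measure_ne_top μ _))).const_mul (w i)

lemma integral_weightedIndicator (w : ι → ℝ) (hA : ∀ i, MeasurableSet (A i)) :
    ∫ ω, weightedIndicator w A ω ∂μ = ∑ i, w i * μ.real (A i) := by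
  simp only [weightedIndicator]
  rw [integral_finsetSum _ fun i _ ↦
    ((integrable_indicator_iff (hA i)).2 (integrableOn_const (measure_ne_top μ _))).const_mul _]
  simp only [integral_const_mul, integral_indicator_one (hA _)]

lemma integral_weightedIndicator_sq (w : ι → ℝ) (hA : ∀ i, MeasurableSet (A i)) :
    ∫ ω, weightedIndicator w A ω ^ 2 ∂μ = ∑ i, ∑ j, w i * w j * μ.real (A i ∩ A j) := by
  simp_rw [weightedIndicator_sq]
  rw [integral_weightedIndicator (A := fun ij : ι × ι ↦ A ij.1 ∩ A ij.2) _
    fun ij ↦ (hA ij.1).inter (hA ij.2), Fintype.sum_prod_type]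

variable [IsProbabilityMeasure μ]

lemma sq_sum_measureReal_le_sum_sum_measureReal_inter (w : ι → ℝ)
    (hA : ∀ i, MeasurableSet (A i)) :
    (∑ i, w i * μ.real (A i)) ^ 2 ≤ ∑ i, ∑ j, w i * w j * μ.real (A i ∩ A j) := by
  rw [← integral_weightedIndicator w hA, ← integral_weightedIndicator_sq w hA]
  exact sq_integral_le_integral_sq (memLp_weightedIndicator w hA 2)

lemma sum_sum_measureReal_symmDiff_le {w : ι → ℝ} (hw : ∑ i, w i = 1)
    (hA : ∀ i, MeasurableSet (A i)) :
    ∑ i, ∑ j, w i * w j * μ.real (A i ∆ A j)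
      ≤ 2 * (√(∑ i, ∑ j, w i * w j * μ.real (A i ∩ A j))
        - ∑ i, ∑ j, w i * w j * μ.real (A i ∩ A j)) := by
  have hr := Real.abs_le_sqrt (sq_sum_measureReal_le_sum_sum_measureReal_inter (μ := μ) w hA)
  simp only [measureReal_symmDiff_eq_add_sub_inter (hA _) (hA _),
    sum_sum_mul_mul_add_sub_two_mul hw]
  linarith [le_abs_self (∑ i, w i * μ.real (A i))]

end

theorem disagreement_le_sqrt_joint_error_general
    (X : Type*) [MeasurableSpace X]
    (μ : Measure (X × ℝ)) [IsProbabilityMeasure μ]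
    (H : Type*) [Fintype H]
    (hyp : H → X → ℝ) (hmeas : ∀ h, Measurable (hyp h))
    (hval : ∀ h x, hyp h x = 1 ∨ hyp h x = -1)
    (hlab : ∀ᵐ p ∂μ, p.2 = 1 ∨ p.2 = -1)
    (ρ : H → ℝ) (hρ1 : ∑ h, ρ h = 1)
    (e d : ℝ)
    (he : e = ∑ h₁, ∑ h₂, ρ h₁ * ρ h₂ *
        (μ {p | hyp h₁ p.1 ≠ p.2 ∧ hyp h₂ p.1 ≠ p.2}).toReal)
    (hd : d = ∑ h₁, ∑ h₂, ρ h₁ * ρ h₂ *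
        (μ {p | hyp h₁ p.1 ≠ hyp h₂ p.1}).toReal) :
    d ≤ 2 * (Real.sqrt e - e) := by
  set err : H → Set (X × ℝ) := fun h ↦ {p | hyp h p.1 ≠ p.2}
  have herr : ∀ h, MeasurableSet (err h) := fun h ↦
    (measurableSet_eq_fun ((hmeas h).comp measurable_fst) measurable_snd).compl
  have hdisagree : ∀ h₁ h₂,
      {p : X × ℝ | hyp h₁ p.1 ≠ hyp h₂ p.1} =ᵐ[μ] (err h₁ ∆ err h₂ : Set (X × ℝ)) := by
    intro h₁ h₂
    filter_upwards [hlab] with p hp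
    exact propext (ne_iff_xor_ne_of_mem_pair (hval h₁ p.1) (hval h₂ p.1) hp)
  have hd' : d = ∑ h₁, ∑ h₂, ρ h₁ * ρ h₂ * μ.real (err h₁ ∆ err h₂) := by
    simp only [hd, ← measureReal_def, measureReal_congr (hdisagree _ _)]
  rw [hd', he]
  exact sum_sum_measureReal_symmDiff_le hρ1 herr

/-- The expected disagreement satisfies `d_ρ ≤ 2(√e_ρ - e_ρ)`, where `e_ρ` is
the expected joint error, provided `2 e_ρ + d_ρ < 1`. -/
theorem disagreement_le_sqrt_joint_error
    (X : Type*) [MeasurableSpace X]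
    (μ : Measure (X × ℝ)) [IsProbabilityMeasure μ]
    (H : Type*) [Fintype H]
    (hyp : H → X → ℝ) (hmeas : ∀ h, Measurable (hyp h))
    (hval : ∀ h x, hyp h x = 1 ∨ hyp h x = -1)
    (hlab : ∀ᵐ p ∂μ, p.2 = 1 ∨ p.2 = -1)
    (ρ : H → ℝ) (hρ0 : ∀ h, 0 ≤ ρ h) (hρ1 : ∑ h, ρ h = 1)
    (e d : ℝ)
    (he : e = ∑ h₁, ∑ h₂, ρ h₁ * ρ h₂ *
        (μ {p | hyp h₁ p.1 ≠ p.2 ∧ hyp h₂ p.1 ≠ p.2}).toReal)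
    (hd : d = ∑ h₁, ∑ h₂, ρ h₁ * ρ h₂ *
        (μ {p | hyp h₁ p.1 ≠ hyp h₂ p.1}).toReal)
    (hcond : 2 * e + d < 1) :
    d ≤ 2 * (Real.sqrt e - e) :=
  disagreement_le_sqrt_joint_error_general X μ H hyp hmeas hval hlab ρ hρ1 e d he hd
end

section
/- For K ∼ Binomial(n,p), E[exp(n·kl(K/n ‖ p))] = ξ(n), and in particular this expectation is independent of p and at most 2√n. -/
/-!
Termwise, `p^k (1-p)^(n-k) exp(n kl(k/n ‖ p)) = (k/n)^k (1-k/n)^(n-k)`, because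
`n kl(k/n ‖ p) = k log(k/(np)) + (n-k) log((n-k)/(n(1-p)))`; summing against `C(n,k)` gives `ξ(n)`
whatever `p` is.

For the bound, the end terms `k = 0, n` of `ξ(n)` equal `1`. Bound `n!` above and `(n-k)!`
exactly through the Stirling sequence `m!/(√(2m)(m/e)^m)` (decreasing, so its value at `n`
is at most its value at `n-k`), and bound `k!` below by `√(2πk)(k/e)^k`. The exponentials cancel,
leaving `C(n,k)(k/n)^k(1-k/n)^(n-k) ≤ √(n/(2πk(n-k))) ≤ (k^(-1/2) + (n-k)^(-1/2))/√(2π)`.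
Summing, `ξ(n) ≤ 2 + 2(2√(n-1) - 1)/√(2π)`, which is at most `2√n` once `n ≥ 9`;
smaller `n` are checked by computation (`ξ(1) = 2` is sharp).
-/

open Finset

/-- Binary KL divergence `kl(p‖q)` with the usual conventions at the boundary. -/
noncomputable def klBer (p q : ℝ) : ℝ :=
  p * Real.log (p / q) + (1 - p) * Real.log ((1 - p) / (1 - q))

/-- `ξ(n) = Σ_{k=0}^n C(n,k) (k/n)^k (1-k/n)^(n-k)` (with the convention `0⁰ = 1`). -/
noncomputable def xi (n : ℕ) : ℝ :=
  ∑ k ∈ Finset.range (n + 1),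
    (n.choose k : ℝ) * ((k : ℝ) / n) ^ k * (1 - (k : ℝ) / n) ^ (n - k)

open Real
open scoped Nat

lemma pow_mul_exp_nat_mul_log_div (k : ℕ) {x p : ℝ} (hp : 0 < p) (hx : 0 ≤ x)
    (hxk : x = 0 → k = 0) : p ^ k * exp (k * log (x / p)) = x ^ k := by
  rcases hx.eq_or_lt with rfl | hx
  · simp [hxk rfl]
  · rw [exp_nat_mul, exp_log (div_pos hx hp), ← mul_pow, mul_div_cancel₀ _ hp.ne']

lemma natCast_mul_klBer_div (p : ℝ) {k n : ℕ} (hk : k ≤ n) :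
    n * klBer (k / n) p = k * log (k / n / p) + (n - k : ℕ) * log ((1 - k / n) / (1 - p)) := by
  rcases Nat.eq_zero_or_pos n with rfl | hn
  · simp [Nat.le_zero.mp hk]
  · rw [klBer, Nat.cast_sub hk]
    field_simp

lemma pow_mul_pow_mul_exp_klBer {p : ℝ} (hp0 : 0 < p) (hp1 : p < 1) {k n : ℕ} (hk : k ≤ n) :
    p ^ k * (1 - p) ^ (n - k) * exp (n * klBer (k / n) p)
      = (k / n) ^ k * (1 - k / n) ^ (n - k) := by
  rcases Nat.eq_zero_or_pos n with rfl | hn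
  · simp [Nat.le_zero.mp hk, klBer]
  have hn' : (n : ℝ) ≠ 0 := by positivity
  have hkn : (k : ℝ) / n ≤ 1 := div_le_one_of_le₀ (by exact_mod_cast hk) n.cast_nonneg
  have hk0 : (k : ℝ) / n = 0 → k = 0 := by simp [hn']
  have hnk0 : 1 - (k : ℝ) / n = 0 → n - k = 0 := by
    rw [sub_eq_zero, eq_comm, div_eq_one_iff_eq hn', Nat.cast_inj]
    omega
  rw [natCast_mul_klBer_div p hk, exp_add, mul_mul_mul_comm,
    pow_mul_exp_nat_mul_log_div k hp0 (by positivity) hk0,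
    pow_mul_exp_nat_mul_log_div (n - k) (sub_pos.2 hp1) (sub_nonneg.2 hkn) hnk0]

namespace Stirling

lemma factorial_le_stirlingSeq_mul {b n : ℕ} (hb : b ≠ 0) (hbn : b ≤ n) :
    (n ! : ℝ) ≤ stirlingSeq b * √(2 * n) * (n / exp 1) ^ n := by
  have hn : n ≠ 0 := by omega
  have h := stirlingSeq'_antitone (Nat.pred_le_pred hbn)
  simp only [Function.comp, Nat.succ_pred hb, Nat.succ_pred hn] at h
  rw [stirlingSeq, div_le_iff₀ (by positivity)] at h
  linarith

lemma choose_mul_div_pow_le {a b : ℕ} (ha : a ≠ 0) (hb : b ≠ 0) :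
    ((a + b).choose a : ℝ) * (a / (a + b)) ^ a * (b / (a + b)) ^ b
      ≤ √((a + b) / (2 * π * a * b)) := by
  set n := a + b
  have hn : (a : ℝ) + b = n := by push_cast [n]; rfl
  have hfac_n : (n ! : ℝ) ≤ stirlingSeq b * √(2 * n) * (n / exp 1) ^ n :=
    factorial_le_stirlingSeq_mul hb (Nat.le_add_left b a)
  have hfac_a : √(2 * π * a) * (a / exp 1) ^ a ≤ a ! := le_factorial_stirling a
  have hfac_b : (b ! : ℝ) = stirlingSeq b * √(2 * b) * (b / exp 1) ^ b := by
    rw [stirlingSeq]; field_simp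
  have hpow : (n / exp 1) ^ n * (((a : ℝ) / n) ^ a * (b / n) ^ b)
      = (a / exp 1) ^ a * (b / exp 1) ^ b := by
    simp only [div_pow, n, pow_add]; field_simp
  have hsb : 0 < stirlingSeq b := (sqrt_pos.2 pi_pos).trans_le (sqrt_pi_le_stirlingSeq hb)
  rw [Nat.cast_add_choose, hn]
  calc (n ! : ℝ) / (a ! * b !) * (a / n) ^ a * (b / n) ^ b
      = n ! * ((a / n) ^ a * (b / n) ^ b) / (a ! * b !) := by ring
    _ ≤ stirlingSeq b * √(2 * n) * (n / exp 1) ^ n * ((a / n) ^ a * (b / n) ^ b)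
          / (√(2 * π * a) * (a / exp 1) ^ a * b !) := by
        gcongr
    _ = √(2 * n) / (√(2 * π * a) * √(2 * b)) := by
        rw [mul_assoc _ ((n / exp 1) ^ n), hpow, hfac_b]
        field_simp
    _ = √(n / (2 * π * a * b)) := by
        rw [← sqrt_mul (by positivity), ← sqrt_div' _ (by positivity)]
        congr 1
        field_simp

end Stirling

lemma sqrt_add_le_sqrt_add_sqrt {x y : ℝ} (hx : 0 ≤ x) (hy : 0 ≤ y) : √(x + y) ≤ √x + √y := by
  rw [sqrt_le_left (by positivity)]
  nlinarith [sq_sqrt hx, sq_sqrt hy, sqrt_nonneg x, sqrt_nonneg y]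

lemma sum_range_inv_sqrt_succ_le {m : ℕ} (hm : 0 < m) :
    ∑ k ∈ range m, (√(k + 1))⁻¹ ≤ 2 * √m - 1 := by
  induction m, hm using Nat.le_induction with
  | base => norm_num
  | succ m _ ih =>
    have hstep : (√(m + 1))⁻¹ ≤ 2 * √(m + 1) - 2 * √m := by
      have h0 := sq_sqrt m.cast_nonneg
      have h1 := sq_sqrt (by positivity : (0 : ℝ) ≤ m + 1)
      rw [inv_le_iff_one_le_mul₀' (by positivity)]
      nlinarith [sq_nonneg (√(m + 1) - √m)]
    rw [sum_range_succ]
    push_cast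
    linarith

lemma choose_mul_div_pow_mul_one_sub_div_pow_le {k n : ℕ} (hk : k ≠ 0) (hkn : k < n) :
    (n.choose k : ℝ) * (k / n) ^ k * (1 - k / n) ^ (n - k)
      ≤ ((√k)⁻¹ + (√(n - k : ℕ))⁻¹) / √(2 * π) := by
  obtain ⟨b, rfl⟩ := Nat.exists_eq_add_of_le hkn.le
  have hb : b ≠ 0 := by omega
  have hsplit : (k + b : ℝ) / (2 * π * k * b) = ((k : ℝ)⁻¹ + (b : ℝ)⁻¹) / (2 * π) := by
    field_simp; ring
  have hcompl : 1 - (k : ℝ) / (k + b) = b / (k + b) := by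
    field_simp; ring
  push_cast
  rw [hcompl, Nat.add_sub_cancel_left]
  calc _ ≤ √((k + b) / (2 * π * k * b)) := Stirling.choose_mul_div_pow_le hk hb
    _ = √((k : ℝ)⁻¹ + (b : ℝ)⁻¹) / √(2 * π) := by rw [hsplit, sqrt_div' _ (by positivity)]
    _ ≤ ((√k)⁻¹ + (√b)⁻¹) / √(2 * π) := by
        rw [← sqrt_inv, ← sqrt_inv]
        gcongr
        exact sqrt_add_le_sqrt_add_sqrt (by positivity) (by positivity)

lemma xi_succ_le {m : ℕ} (hm : 0 < m) : xi (m + 1) ≤ 2 + 2 * (2 * √m - 1) / √(2 * π) := by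
  have hreflect : ∑ k ∈ range m, (√(m - k : ℕ))⁻¹ = ∑ k ∈ range m, (√(k + 1))⁻¹ := by
    rw [← sum_range_reflect (fun k : ℕ => (√((k : ℝ) + 1))⁻¹) m]
    refine sum_congr rfl fun k hk => ?_
    rw [← Nat.cast_add_one, show m - 1 - k + 1 = m - k by have := mem_range.mp hk; omega]
  have hinterior : ∑ k ∈ range m, ((m + 1).choose (k + 1) : ℝ) * ((k + 1) / (m + 1)) ^ (k + 1)
      * (1 - (k + 1) / (m + 1)) ^ (m - k) ≤ 2 * (2 * √m - 1) / √(2 * π) := by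
    calc _ ≤ ∑ k ∈ range m, ((√(k + 1))⁻¹ + (√(m - k : ℕ))⁻¹) / √(2 * π) :=
          sum_le_sum fun k hk => by
            simpa using choose_mul_div_pow_mul_one_sub_div_pow_le k.succ_ne_zero
              (Nat.succ_lt_succ (mem_range.mp hk))
      _ = 2 * ∑ k ∈ range m, (√(k + 1))⁻¹ / √(2 * π) := by
          rw [← sum_div, ← sum_div, sum_add_distrib, hreflect]
          ring
      _ ≤ _ := by
          rw [← sum_div, mul_div_assoc]
          gcongr
          exact sum_range_inv_sqrt_succ_le hm
  rw [xi, sum_range_succ', sum_range_succ]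
  simp only [Nat.cast_add, Nat.cast_one, Nat.cast_zero, Nat.choose_self, Nat.choose_zero_right,
    Nat.reduceSubDiff, div_self (by positivity : (m : ℝ) + 1 ≠ 0), zero_div, sub_zero, sub_self,
    tsub_self, tsub_zero, one_pow, pow_zero, mul_one]
  linarith

lemma xi_le_two_mul_sqrt {n : ℕ} (hn : 0 < n) : xi n ≤ 2 * √n := by
  rcases lt_or_ge n 9 with hsmall | hbig
  · refine le_of_pow_le_pow_left₀ two_ne_zero (by positivity) ?_
    rw [mul_pow, sq_sqrt n.cast_nonneg]
    interval_cases n <;> norm_num [xi, sum_range_succ, Nat.choose]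
  obtain ⟨m, rfl⟩ := Nat.exists_eq_add_one_of_ne_zero hn.ne'
  have hm1 : 1 ≤ √m := le_sqrt_of_sq_le (by norm_num; exact_mod_cast (by omega : 1 ≤ m))
  have hm : √m ≤ √(m + 1) := sqrt_le_sqrt (by simp)
  have h3 : 3 ≤ √(m + 1) := le_sqrt_of_sq_le (by norm_num; exact_mod_cast hbig)
  have hpi : 5 / 2 ≤ √(2 * π) := le_sqrt_of_sq_le (by nlinarith [pi_gt_d2])
  have hc : 2 * (2 * √m - 1) / √(2 * π) ≤ 2 / 5 * (2 * (2 * √m - 1)) := by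
    rw [div_le_iff₀ (by positivity)]
    nlinarith
  push_cast
  linarith [xi_succ_le (m := m) (by omega)]

/-- For `K ∼ Binomial(n,p)`, `E[exp(n·kl(K/n ‖ p))] = ξ(n)`; in particular this
expectation is independent of `p` and at most `2√n`. -/
theorem binomial_exp_kl_eq_xi (n : ℕ) (hn : 1 ≤ n) (p : ℝ)
    (hp0 : 0 < p) (hp1 : p < 1) :
    (∑ k ∈ Finset.range (n + 1),
        (n.choose k : ℝ) * p ^ k * (1 - p) ^ (n - k) *
          Real.exp (n * klBer ((k : ℝ) / n) p)) = xi n ∧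
    (∑ k ∈ Finset.range (n + 1),
        (n.choose k : ℝ) * p ^ k * (1 - p) ^ (n - k) *
          Real.exp (n * klBer ((k : ℝ) / n) p)) ≤ 2 * Real.sqrt n := by
  have hxi : (∑ k ∈ Finset.range (n + 1),
      (n.choose k : ℝ) * p ^ k * (1 - p) ^ (n - k) * exp (n * klBer ((k : ℝ) / n) p)) = xi n :=
    sum_congr rfl fun k hk => by
      linear_combination (n.choose k : ℝ) *
        pow_mul_pow_mul_exp_klBer hp0 hp1 (Nat.lt_succ_iff.mp (mem_range.mp hk))
  exact ⟨hxi, hxi ▸ xi_le_two_mul_sqrt hn⟩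
end
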